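/- For a broom with path of length a ≥ 0 and b ≥ 1 leaves, with n = a + b + 1 and b = ⌈2·log₂ n⌉, the local mean subtree order at the far end of the path is at least n − log₂ n − 3/2 (for n large enough that a ≥ 0 holds, i.e. n ≥ b + 1). -/

import Mathlib

open scoped Classical

/-- The subtrees (nonempty connected induced subgraphs) of a graph, as vertex sets. -/
noncomputable def subtrees {V : Type*} [Fintype V] (G : SimpleGraph V) :
    Finset (Finset V) :=
  Finset.univ.filter (fun s => s.Nonempty ∧ (G.induce (s : Set V)).Connected)

/-- The subtrees of a graph containing a fixed vertex `r`. -/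
noncomputable def subtreesThrough {V : Type*} [Fintype V] (G : SimpleGraph V) (r : V) :
    Finset (Finset V) :=
  Finset.univ.filter (fun s => r ∈ s ∧ (G.induce (s : Set V)).Connected)

/-- The broom with a handle of length `a` and `b` leaves: vertices `0,…,a` form a path
and vertices `a+1,…,a+b` are leaves attached to vertex `a`. The root is vertex `0`. -/
def broom (a b : ℕ) : SimpleGraph (Fin (a + b + 1)) :=
  SimpleGraph.fromRel (fun i j =>
    (i.val + 1 = j.val ∧ j.val ≤ a) ∨ (i.val = a ∧ a < j.val))

/-!
A connected set through the root `0` of the broom cannot skip a vertex of the handle, so the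
subtrees through `0` are the initial segments `{0, …, k}` with `k < a` together with the sets
`{0, …, a} ∪ L` for an arbitrary set `L` of leaves. Counting them gives `a + 2^b` subtrees of
total order `a(a+1)/2 + 2^b (a+1) + b 2^(b-1)`, so the mean order is
`n - (b + a n / (a + 2^b)) / 2`. Since `2^b ≥ n²`, the fraction is at most `1`, and
`b < 2 log₂ n + 1`.
-/

open Finset

lemma SimpleGraph.Reachable.of_adj_closed {V : Type*} {G : SimpleGraph V} {P : V → Prop}
    (hP : ∀ ⦃x y⦄, G.Adj x y → P x → P y) {x y : V} (h : G.Reachable x y) (hx : P x) :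
    P y := by
  obtain ⟨p⟩ := h
  induction p with
  | nil => exact hx
  | cons hadj _ ih => exact ih (hP hadj hx)

lemma Finset.sum_card_powerset_mul_two {α : Type*} (s : Finset α) :
    (∑ t ∈ s.powerset, #t) * 2 = #s * 2 ^ #s := by
  rw [sum_powerset_apply_card (fun m => m)]
  simp only [smul_eq_mul, mul_comm (Nat.choose _ _), Nat.sum_range_mul_choose]
  rcases Nat.eq_zero_or_pos #s with h | h
  · simp [h]
  · rw [mul_assoc, ← pow_succ, Nat.sub_add_cancel h]

lemma sq_le_two_pow_ceil_two_mul_logb {x : ℝ} (hx : 0 < x) :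
    x ^ 2 ≤ 2 ^ ⌈2 * Real.logb 2 x⌉₊ := by
  calc x ^ 2 = (2 : ℝ) ^ (2 * Real.logb 2 x) := by
        rw [mul_comm, Real.rpow_mul zero_le_two, Real.rpow_logb two_pos (by norm_num) hx,
          Real.rpow_two]
    _ ≤ (2 : ℝ) ^ (⌈2 * Real.logb 2 x⌉₊ : ℝ) :=
        Real.rpow_le_rpow_of_exponent_le one_le_two (Nat.le_ceil _)
    _ = 2 ^ ⌈2 * Real.logb 2 x⌉₊ := Real.rpow_natCast _ _

section Broom

variable {a b : ℕ}

lemma broom_adj {v w : Fin (a + b + 1)} : (broom a b).Adj v w ↔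
    ((v.val + 1 = w.val ∧ w.val ≤ a) ∨ (v.val = a ∧ a < w.val)) ∨
      ((w.val + 1 = v.val ∧ v.val ≤ a) ∨ (w.val = a ∧ a < v.val)) := by
  rw [broom, SimpleGraph.fromRel_adj, and_iff_right_iff_imp]
  rintro h rfl
  omega

/-- `broomParent v` is the neighbour of `v` on its path to the root `0`. -/
def broomParent (v : Fin (a + b + 1)) : Fin (a + b + 1) := ⟨min (v.val - 1) a, by omega⟩

lemma broom_adj_broomParent {v : Fin (a + b + 1)} (hv : v.val ≠ 0) :
    (broom a b).Adj (broomParent v) v := by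
  simp only [broom_adj, broomParent]
  omega

lemma broom_induce_connected_iff {s : Finset (Fin (a + b + 1))}
    (h0 : (⟨0, Nat.succ_pos _⟩ : Fin (a + b + 1)) ∈ s) :
    ((broom a b).induce (s : Set (Fin (a + b + 1)))).Connected ↔
      ∀ v ∈ s, ∀ u : Fin (a + b + 1), u.val ≤ a → u.val < v.val → u ∈ s := by
  set G := (broom a b).induce (s : Set (Fin (a + b + 1)))
  let r : (s : Set (Fin (a + b + 1))) := ⟨_, h0⟩
  constructor
  · intro hc v hv u hua huv
    by_contra hus
    have hu0 : u.val ≠ 0 := fun h => hus ((Fin.ext h : u = ⟨0, _⟩) ▸ h0)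
    -- removing the handle vertex `u` cuts every vertex above it off from the root
    have hcut : ∀ ⦃x y⦄, G.Adj x y → x.val.val < u.val → y.val.val < u.val := by
      intro x y hxy hx
      have hyu : y.val.val ≠ u.val := fun h => hus (Fin.ext h ▸ y.2)
      simp only [G, SimpleGraph.comap_adj, Function.Embedding.subtype_apply, broom_adj] at hxy
      omega
    have hvu : v.val < u.val :=
      (hc.preconnected r ⟨v, hv⟩).of_adj_closed hcut (Nat.pos_of_ne_zero hu0)
    omega
  · intro hD
    have hreach : ∀ m, ∀ v : (s : Set (Fin (a + b + 1))), v.val.val = m →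
        G.Reachable r v := by
      intro m
      induction m using Nat.strong_induction_on with
      | _ m ih =>
        rintro ⟨v, hv⟩ rfl
        by_cases hv0 : v.val = 0
        · rw [show (⟨v, hv⟩ : (s : Set _)) = r from Subtype.ext (Fin.ext hv0)]
        have hpv : (broomParent v).val < v.val := by simp only [broomParent]; omega
        have hp : broomParent v ∈ s := hD v hv _ (min_le_right _ _) hpv
        exact (ih _ hpv ⟨_, hp⟩ rfl).trans
          (show G.Adj ⟨_, hp⟩ ⟨v, hv⟩ from broom_adj_broomParent hv0).reachable
    have : Nonempty (s : Set (Fin (a + b + 1))) := ⟨r⟩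
    exact ⟨fun x y => (hreach _ x rfl).symm.trans (hreach _ y rfl)⟩

variable (a b) in
def broomSegment (k : ℕ) : Finset (Fin (a + b + 1)) := {v | v.val ≤ k}

variable (a b) in
def broomLeaves : Finset (Fin (a + b + 1)) := (broomSegment a b a)ᶜ

@[simp]
lemma mem_broomSegment {k : ℕ} {v : Fin (a + b + 1)} :
    v ∈ broomSegment a b k ↔ v.val ≤ k := by
  simp [broomSegment]

@[simp]
lemma mem_broomLeaves {v : Fin (a + b + 1)} : v ∈ broomLeaves a b ↔ a < v.val := by
  simp [broomLeaves]

lemma card_broomSegment {k : ℕ} (hk : k ≤ a + b) : #(broomSegment a b k) = k + 1 := by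
  have : broomSegment a b k = ({v : Fin (a + b + 1) | v < k + 1} : Finset _) := by
    ext v
    simp
  rw [this, Fin.card_filter_val_lt]
  omega

lemma card_broomLeaves : #(broomLeaves a b) = b := by
  rw [broomLeaves, card_compl, Fintype.card_fin, card_broomSegment (Nat.le_add_right a b)]
  omega

lemma subtreesThrough_broom_eq :
    subtreesThrough (broom a b) ⟨0, Nat.succ_pos _⟩ =
      (range a).image (broomSegment a b) ∪
        (broomLeaves a b).powerset.image (broomSegment a b a ∪ ·) := by
  ext s
  simp only [subtreesThrough, mem_filter, mem_univ, true_and, mem_union, mem_image, mem_range,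
    mem_powerset]
  constructor
  · rintro ⟨h0, hc⟩
    have hD := (broom_induce_connected_iff h0).mp hc
    by_cases ha : (⟨a, by omega⟩ : Fin (a + b + 1)) ∈ s
    · have hseg : broomSegment a b a ⊆ s := by
        intro v hv
        have hva := mem_broomSegment.mp hv
        rcases hva.lt_or_eq with hlt | heq
        · exact hD _ ha v hva hlt
        · exact (Fin.ext heq : v = ⟨a, _⟩) ▸ ha
      refine .inr ⟨s \ broomSegment a b a, ?_, union_sdiff_of_subset hseg⟩
      rw [broomLeaves, sdiff_eq_inter_compl]
      exact inter_subset_right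
    · have hlt : ∀ v ∈ s, v.val < a := by
        intro v hv
        by_contra! hav
        rcases hav.lt_or_eq with hlt | heq
        · exact ha (hD v hv _ le_rfl hlt)
        · exact ha ((Fin.ext heq.symm : v = ⟨a, _⟩) ▸ hv)
      obtain ⟨w, hw, hmax⟩ := exists_max_image s Fin.val ⟨_, h0⟩
      refine .inl ⟨w.val, hlt w hw, ?_⟩
      ext v
      rw [mem_broomSegment]
      refine ⟨fun hvw => ?_, fun hv => hmax v hv⟩
      rcases hvw.lt_or_eq with hlt' | heq
      · exact hD w hw v (by have := hlt w hw; omega) hlt'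
      · exact Fin.ext heq ▸ hw
  · rintro (⟨k, -, rfl⟩ | ⟨L, -, rfl⟩)
    · refine ⟨by simp, (broom_induce_connected_iff (by simp)).mpr ?_⟩
      simp only [mem_broomSegment]
      omega
    · refine ⟨by simp, (broom_induce_connected_iff (by simp)).mpr ?_⟩
      simp only [mem_union, mem_broomSegment]
      omega

lemma injOn_broomSegment : Set.InjOn (broomSegment a b) (range a) := by
  intro k hk l hl h
  have hk' := mem_range.mp hk
  have hl' := mem_range.mp hl
  have := congrArg card h
  rw [card_broomSegment (by omega), card_broomSegment (by omega)] at this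
  omega

lemma disjoint_broomSegment_of_subset_broomLeaves {L : Finset (Fin (a + b + 1))}
    (hL : L ⊆ broomLeaves a b) : Disjoint (broomSegment a b a) L :=
  disjoint_compl_right.mono_right hL

lemma injOn_broomSegment_union :
    Set.InjOn (broomSegment a b a ∪ ·) (broomLeaves a b).powerset := by
  intro L hL M hM h
  rw [coe_powerset, Set.mem_preimage, Set.mem_powerset_iff, coe_subset] at hL hM
  rw [← union_sdiff_cancel_left (disjoint_broomSegment_of_subset_broomLeaves hL),
    ← union_sdiff_cancel_left (disjoint_broomSegment_of_subset_broomLeaves hM)]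
  exact congrArg (· \ broomSegment a b a) h

lemma disjoint_image_broomSegment :
    Disjoint ((range a).image (broomSegment a b))
      ((broomLeaves a b).powerset.image (broomSegment a b a ∪ ·)) := by
  rw [disjoint_left]
  intro t ht hL
  obtain ⟨k, hk, rfl⟩ := mem_image.mp ht
  obtain ⟨L, -, hkL⟩ := mem_image.mp hL
  have hak : (⟨a, by omega⟩ : Fin (a + b + 1)) ∈ broomSegment a b k := by
    rw [← hkL]
    exact mem_union_left _ (mem_broomSegment.mpr le_rfl)
  have hak' : a ≤ k := mem_broomSegment.mp hak
  have := mem_range.mp hk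
  omega

lemma card_subtreesThrough_broom :
    #(subtreesThrough (broom a b) ⟨0, Nat.succ_pos _⟩) = a + 2 ^ b := by
  rw [subtreesThrough_broom_eq, card_union_of_disjoint disjoint_image_broomSegment,
    card_image_of_injOn injOn_broomSegment, card_image_of_injOn injOn_broomSegment_union,
    card_range, card_powerset, card_broomLeaves]

lemma sum_card_subtreesThrough_broom :
    (∑ s ∈ subtreesThrough (broom a b) ⟨0, Nat.succ_pos _⟩, #s) * 2 =
      a * (a + 1) + 2 ^ b * (2 * (a + 1) + b) := by
  rw [subtreesThrough_broom_eq, sum_union disjoint_image_broomSegment,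
    sum_image injOn_broomSegment, sum_image injOn_broomSegment_union]
  have hpath : (∑ k ∈ range a, #(broomSegment a b k)) * 2 = a * (a + 1) := by
    have gauss := sum_range_id_mul_two (a + 1)
    rw [sum_range_succ', add_zero, Nat.add_sub_cancel] at gauss
    rw [sum_congr rfl fun k hk => card_broomSegment (by simp at hk; omega), gauss, mul_comm]
  have hleaves : (∑ L ∈ (broomLeaves a b).powerset, #(broomSegment a b a ∪ L)) * 2 =
      2 ^ b * (2 * (a + 1) + b) := by
    rw [sum_congr rfl fun L hL => card_union_of_disjoint
        (disjoint_broomSegment_of_subset_broomLeaves (mem_powerset.mp hL)),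
      sum_add_distrib, add_mul, sum_card_powerset_mul_two, sum_const, card_powerset,
      card_broomLeaves, card_broomSegment (Nat.le_add_right a b), smul_eq_mul]
    ring
  rw [add_mul, hpath, hleaves]

lemma broom_mean_subtree_order_eq :
    (∑ s ∈ subtreesThrough (broom a b) ⟨0, Nat.succ_pos _⟩, (#s : ℝ)) /
        #(subtreesThrough (broom a b) ⟨0, Nat.succ_pos _⟩) =
      (a + b + 1 : ℝ) - (b + a * (a + b + 1) / (a + 2 ^ b)) / 2 := by
  have hsum : (∑ s ∈ subtreesThrough (broom a b) ⟨0, Nat.succ_pos _⟩, (#s : ℝ)) * 2 =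
      a * (a + 1) + 2 ^ b * (2 * (a + 1) + b) := by
    exact_mod_cast sum_card_subtreesThrough_broom
  have hN : (0 : ℝ) < a + 2 ^ b := by positivity
  rw [card_subtreesThrough_broom, Nat.cast_add, Nat.cast_pow, Nat.cast_two]
  field_simp
  linear_combination hsum

end Broom

theorem stmt16_general (n a b : ℕ) (hb : b = ⌈2 * Real.logb 2 n⌉₊)
    (hnab : n = a + b + 1) :
    (n : ℝ) - Real.logb 2 n - 3 / 2 ≤
      (∑ s ∈ subtreesThrough (broom a b) ⟨0, Nat.succ_pos _⟩, (s.card : ℝ)) /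
        (subtreesThrough (broom a b) ⟨0, Nat.succ_pos _⟩).card := by
  have hn : (n : ℝ) = a + b + 1 := by exact_mod_cast hnab
  have hn1 : (1 : ℝ) ≤ n := Nat.one_le_cast.mpr (by omega)
  have hb_lt : (b : ℝ) < 2 * Real.logb 2 n + 1 :=
    hb ▸ Nat.ceil_lt_add_one (mul_nonneg zero_le_two (Real.logb_nonneg one_lt_two hn1))
  have hfrac : a * n / (a + 2 ^ b : ℝ) ≤ 1 := by
    rw [div_le_one (by positivity)]
    calc (a * n : ℝ) ≤ n ^ 2 := by
          rw [sq, hn]; gcongr; linarith [(b.cast_nonneg : (0 : ℝ) ≤ b)]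
      _ ≤ 2 ^ b := hb ▸ sq_le_two_pow_ceil_two_mul_logb (by linarith)
      _ ≤ a + 2 ^ b := le_add_of_nonneg_left a.cast_nonneg
  rw [broom_mean_subtree_order_eq, ← hn]
  linarith

/-- For the broom with `n = a + b + 1` vertices and `b = ⌈2·log₂ n⌉` leaves, the local
mean subtree order at the far end `r` of the path is at least `n − log₂ n − 3/2`. -/
theorem stmt16 (n a b : ℕ) (hn : 2 ≤ n) (hb : b = ⌈2 * Real.logb 2 n⌉₊)
    (hnab : n = a + b + 1) :
    (n : ℝ) - Real.logb 2 n - 3 / 2 ≤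
      (∑ s ∈ subtreesThrough (broom a b) ⟨0, Nat.succ_pos _⟩, (s.card : ℝ)) /
        (subtreesThrough (broom a b) ⟨0, Nat.succ_pos _⟩).card :=
  stmt16_general n a b hb hnab
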